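/- On the full binary tree with i.i.d. mean-one exponentials T_v and α > 1, define the stochastic Picard iterates with ground state η: X_n(t) = Σ_{|v|=n-1} 2η(α^n(t - Θ_v)) (with η(t)=0 for t ≤ 0, Θ_v = Σ_{j=0}^{|v|} α^{-j} T_{v|j}), where η satisfies η(t) = 2∫_0^t e^{-s} η(α(t-s)) ds. Then for each t > 0, (X_n(t))_{n≥1} is a nonnegative martingale with respect to F_n = σ(T_v : |v| ≤ n), and E[X_n(t)] = η(t) for all n. -/

import Mathlib

open MeasureTheory ProbabilityTheory
open scoped ENNReal NNReal

/-- The exponential distribution with rate 1 on `ℝ`. -/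
noncomputable def expMeasure1 : Measure ℝ :=
  volume.withDensity fun x => ENNReal.ofReal (if 0 ≤ x then Real.exp (-x) else 0)

/-- The replacement time `Θ_v = Σ_{j=0}^{|v|} α^{-j} T_{v|j}` of a vertex `v`. -/
noncomputable def treeTheta {Ω : Type*} (α : ℝ) (T : List Bool → Ω → ℝ)
    (v : List Bool) (ω : Ω) : ℝ :=
  ∑ j ∈ Finset.range (v.length + 1), (1 / α) ^ j * T (v.take j) ω

/-- The stochastic Picard iterate with ground state `η`:
`X_{n+1}(t) = Σ_{|v| = n} 2 η(α^{n+1}(t - Θ_v))`, indexed here by `n`. -/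
noncomputable def pantIter {Ω : Type*} (α : ℝ) (T : List Bool → Ω → ℝ) (η : ℝ → ℝ)
    (t : ℝ) (n : ℕ) (ω : Ω) : ℝ :=
  ∑ f : Fin n → Bool, 2 * η (α ^ (n + 1) * (t - treeTheta α T (List.ofFn f) ω))

namespace PantProof

open Set
open scoped ENNReal NNReal

/-! ### Analytic lemmas about the fixed point `η` -/

lemma cov {α : ℝ} (hα : 0 < α) {η : ℝ → ℝ} (hηm : Measurable η) (x : ℝ) :
    ∫⁻ s in Set.Ioc 0 x, ENNReal.ofReal (η (α * (x - s))) ∂volume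
      = ENNReal.ofReal α⁻¹ * ∫⁻ y in Set.Ioc 0 (α * x), ENNReal.ofReal (η y) ∂volume := by
  have hφ : Measurable fun y => ENNReal.ofReal (η y) := ENNReal.measurable_ofReal.comp hηm
  have hT : Measurable fun s : ℝ => α * x - α * s :=
    measurable_const.sub (measurable_id.const_mul _)
  have hmap : Measure.map (fun s : ℝ => α * x - α * s) volume
      = ENNReal.ofReal α⁻¹ • volume := by
    have h1 : (fun s : ℝ => α * x - α * s) = (fun y : ℝ => α * x + y) ∘ (fun s : ℝ => (-α) * s) := by
      funext s; simp only [Function.comp_apply]; ring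
    have hg : Measurable fun y : ℝ => α * x + y := by fun_prop
    have hf : Measurable fun s : ℝ => (-α) * s := by fun_prop
    rw [h1, ← Measure.map_map hg hf,
      Real.map_volume_mul_left (by linarith : (-α) ≠ 0), Measure.map_smul,
      map_add_left_eq_self volume (α * x), abs_inv, abs_neg, abs_of_pos hα]
  have hpre : (fun s : ℝ => α * x - α * s) ⁻¹' Set.Ioo 0 (α * x) = Set.Ioo 0 x := by
    ext s
    simp only [Set.mem_preimage, Set.mem_Ioo]
    constructor
    · rintro ⟨h1, h2⟩; constructor <;> nlinarith
    · rintro ⟨h1, h2⟩; constructor <;> nlinarith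
  have key := setLIntegral_map (μ := volume) (s := Set.Ioo 0 (α * x)) measurableSet_Ioo hφ hT
  rw [hmap, Measure.restrict_smul, lintegral_smul_measure, hpre] at key
  have e1 : ∫⁻ s in Set.Ioc 0 x, ENNReal.ofReal (η (α * (x - s))) ∂volume
      = ∫⁻ s in Set.Ioo 0 x, ENNReal.ofReal (η (α * x - α * s)) ∂volume := by
    rw [← Measure.restrict_congr_set Ioo_ae_eq_Ioc]
    congr 1; funext s; ring_nf
  have e2 : ∫⁻ y in Set.Ioc 0 (α * x), ENNReal.ofReal (η y) ∂volume
      = ∫⁻ y in Set.Ioo 0 (α * x), ENNReal.ofReal (η y) ∂volume := by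
    rw [← Measure.restrict_congr_set Ioo_ae_eq_Ioc]
  rw [e1, e2, ← key, smul_eq_mul]

/-- If the local Lebesgue integral of `η` up to `α*u` is infinite then `η u = 0`. -/
lemma eta_eq_zero_of_top {α : ℝ} {η : ℝ → ℝ} (hα : 1 < α) (hηm : Measurable η)
    (hηnonneg : ∀ u, 0 ≤ η u)
    (hηfix : ∀ u : ℝ, 0 ≤ u →
      η u = 2 * ∫ s in (0 : ℝ)..u, Real.exp (-s) * η (α * (u - s)))
    {u : ℝ} (hu : 0 < u)
    (htop : ∫⁻ y in Set.Ioc 0 (α * u), ENNReal.ofReal (η y) ∂volume = ∞) : η u = 0 := by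
  by_contra hne
  have hii : IntervalIntegrable (fun s => Real.exp (-s) * η (α * (u - s))) volume 0 u := by
    by_contra hni
    rw [hηfix u hu.le, intervalIntegral.integral_undef hni, mul_zero] at hne
    exact hne rfl
  rw [intervalIntegrable_iff_integrableOn_Ioc_of_le hu.le] at hii
  have hfin := hii.2
  rw [HasFiniteIntegral] at hfin
  have hm1 : Measurable fun s : ℝ => α * (u - s) := by fun_prop
  have hm : Measurable fun s : ℝ => ENNReal.ofReal (η (α * (u - s))) :=
    (hηm.comp hm1).ennreal_ofReal
  have hge : ENNReal.ofReal (Real.exp (-u))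
          * ∫⁻ s in Set.Ioc 0 u, ENNReal.ofReal (η (α * (u - s))) ∂volume
      ≤ ∫⁻ s in Set.Ioc 0 u, ‖Real.exp (-s) * η (α * (u - s))‖ₑ ∂volume := by
    have hexp : Measurable fun s : ℝ => Real.exp (-s) := by fun_prop
    have heta : Measurable fun s : ℝ => η (α * (u - s)) := hηm.comp hm1
    have hnm : Measurable fun s : ℝ => ‖Real.exp (-s) * η (α * (u - s))‖ₑ :=
      (hexp.mul heta).enorm
    rw [← lintegral_const_mul _ hm]
    apply setLIntegral_mono hnm
    intro s hs
    rw [Real.enorm_eq_ofReal (mul_nonneg (Real.exp_nonneg _) (hηnonneg _)),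
      ENNReal.ofReal_mul (Real.exp_nonneg _)]
    exact mul_le_mul_left (ENNReal.ofReal_le_ofReal (Real.exp_le_exp.2 (by linarith [hs.2]))) _
  rw [cov (by linarith) hηm u, htop] at hge
  have hc1 : ENNReal.ofReal α⁻¹ ≠ 0 := by
    simp only [ne_eq, ENNReal.ofReal_eq_zero, not_le]
    exact inv_pos.mpr (by linarith)
  have hc2 : ENNReal.ofReal (Real.exp (-u)) ≠ 0 := by
    simp only [ne_eq, ENNReal.ofReal_eq_zero, not_le]
    exact Real.exp_pos _
  rw [ENNReal.mul_top hc1, ENNReal.mul_top hc2] at hge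
  exact absurd (top_le_iff.mp hge) hfin.ne

/-- `η` is locally integrable. -/
lemma L_fin {α : ℝ} {η : ℝ → ℝ} (hα : 1 < α) (hηm : Measurable η) (hηnonneg : ∀ u, 0 ≤ η u)
    (hηfix : ∀ u : ℝ, 0 ≤ u →
      η u = 2 * ∫ s in (0 : ℝ)..u, Real.exp (-s) * η (α * (u - s)))
    (x : ℝ) : ∫⁻ y in Set.Ioc 0 x, ENNReal.ofReal (η y) ∂volume < ∞ := by
  by_contra hcon
  push_neg at hcon
  have hx0 : ∫⁻ y in Set.Ioc 0 x, ENNReal.ofReal (η y) ∂volume = ∞ := top_le_iff.mp hcon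
  set S : Set ℝ := {z | ∫⁻ y in Set.Ioc 0 z, ENNReal.ofReal (η y) ∂volume = ∞} with hS
  have hSpos : ∀ z ∈ S, 0 < z := by
    intro z hz
    by_contra hle
    push_neg at hle
    have : Set.Ioc (0:ℝ) z = ∅ := Set.Ioc_eq_empty (by intro h; linarith)
    rw [hS] at hz
    simp only [Set.mem_setOf_eq, this, Measure.restrict_empty, lintegral_zero_measure] at hz
    exact (by simp : (0:ℝ≥0∞) ≠ ∞) hz
  have hne : S.Nonempty := ⟨x, hx0⟩
  have hbdd : BddBelow S := ⟨0, fun z hz => (hSpos z hz).le⟩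
  set c := sInf S with hc
  have hc0 : 0 ≤ c := le_csInf hne fun z hz => (hSpos z hz).le
  have hmono : ∀ a b : ℝ, a ≤ b →
      (∫⁻ y in Set.Ioc 0 a, ENNReal.ofReal (η y) ∂volume)
        ≤ ∫⁻ y in Set.Ioc 0 b, ENNReal.ofReal (η y) ∂volume :=
    fun a b hab => lintegral_mono_set (Set.Ioc_subset_Ioc_right hab)
  have hαpos : (0:ℝ) < α := by linarith
  have hzero : ∀ v : ℝ, c / α < v → η v = 0 := by
    intro v hv
    have hv0 : 0 < v := lt_of_le_of_lt (div_nonneg hc0 hαpos.le) hv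
    have hcav : c < α * v := by
      rw [div_lt_iff₀ hαpos] at hv; linarith
    obtain ⟨z, hzS, hzlt⟩ := exists_lt_of_csInf_lt hne hcav
    exact eta_eq_zero_of_top hα hηm hηnonneg hηfix hv0
      (top_le_iff.mp (hzS ▸ hmono z (α * v) hzlt.le))
  by_cases hcpos : 0 < c
  · set d := (c / α + c) / 2 with hd
    have hd1 : c / α < d := by
      rw [hd]; have : c / α < c := div_lt_self hcpos hα; linarith
    have hd2 : d < c := by
      rw [hd]; have : c / α < c := div_lt_self hcpos hα; linarith
    have hdfin : ∫⁻ y in Set.Ioc 0 d, ENNReal.ofReal (η y) ∂volume ≠ ∞ := by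
      intro h
      exact absurd (csInf_le hbdd h) (not_le.mpr hd2)
    have hdx : d ≤ x := le_trans hd2.le (csInf_le hbdd hx0)
    have hsplit : Set.Ioc (0:ℝ) x = Set.Ioc 0 d ∪ Set.Ioc d x :=
      (Set.Ioc_union_Ioc_eq_Ioc (le_trans (div_nonneg hc0 hαpos.le) (le_of_lt hd1)) hdx).symm
    rw [hsplit, lintegral_union measurableSet_Ioc (Set.Ioc_disjoint_Ioc_of_le le_rfl)] at hx0
    have htail : ∫⁻ y in Set.Ioc d x, ENNReal.ofReal (η y) ∂volume = 0 := by
      rw [setLIntegral_congr_fun measurableSet_Ioc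
        (fun y hy => ?_), lintegral_zero]
      rw [hzero y (lt_of_lt_of_le hd1 hy.1.le), ENNReal.ofReal_zero]
    rw [htail, add_zero] at hx0
    exact hdfin hx0
  · have hc0' : c = 0 := le_antisymm (not_lt.mp hcpos) hc0
    have : ∫⁻ y in Set.Ioc 0 x, ENNReal.ofReal (η y) ∂volume = 0 := by
      rw [setLIntegral_congr_fun measurableSet_Ioc
        (fun y hy => ?_), lintegral_zero]
      rw [hzero y (by rw [hc0']; simpa using hy.1), ENNReal.ofReal_zero]
    rw [this] at hx0
    exact (by simp : (0:ℝ≥0∞) ≠ ∞) hx0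

lemma dens_meas : Measurable fun u : ℝ => ENNReal.ofReal (if 0 ≤ u then Real.exp (-u) else 0) :=
  ENNReal.measurable_ofReal.comp
    (Measurable.ite (measurableSet_le measurable_const measurable_id)
      (measurable_id.neg.exp) measurable_const)

/-- The key exponential identity. -/
lemma E1 {α : ℝ} {η : ℝ → ℝ} (hα : 1 < α) (hηm : Measurable η) (hηnonneg : ∀ u, 0 ≤ η u)
    (hη0 : ∀ u : ℝ, u ≤ 0 → η u = 0)
    (hηfix : ∀ u : ℝ, 0 ≤ u →
      η u = 2 * ∫ s in (0 : ℝ)..u, Real.exp (-s) * η (α * (u - s)))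
    (x : ℝ) :
    ∫⁻ u, ENNReal.ofReal (η (α * (x - u))) ∂expMeasure1 = 2⁻¹ * ENNReal.ofReal (η x) := by
  have hαpos : (0:ℝ) < α := by linarith
  have hφm : Measurable fun u : ℝ => ENNReal.ofReal (η (α * (x - u))) :=
    ENNReal.measurable_ofReal.comp (hηm.comp (by fun_prop))
  rw [expMeasure1, lintegral_withDensity_eq_lintegral_mul volume dens_meas hφm]
  simp only [Pi.mul_apply]
  rcases le_or_gt x 0 with hx | hx
  · have hzero : (fun u : ℝ => (ENNReal.ofReal (if 0 ≤ u then Real.exp (-u) else 0) *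
        ENNReal.ofReal (η (α * (x - u))))) = fun _ => 0 := by
      funext u
      rcases le_or_gt 0 u with hu | hu
      · rw [hη0 (α * (x - u)) (mul_nonpos_of_nonneg_of_nonpos hαpos.le (by linarith)),
          ENNReal.ofReal_zero, mul_zero]
      · rw [if_neg (not_le.mpr hu), ENNReal.ofReal_zero, zero_mul]
    rw [hzero, lintegral_zero, hη0 x hx, ENNReal.ofReal_zero, mul_zero]
  · have hcongr : (fun u : ℝ => (ENNReal.ofReal (if 0 ≤ u then Real.exp (-u) else 0) *
          ENNReal.ofReal (η (α * (x - u)))))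
        =ᵐ[volume] (Set.Ioc 0 x).indicator
          (fun u => ENNReal.ofReal (Real.exp (-u) * η (α * (x - u)))) := by
      filter_upwards [compl_mem_ae_iff.mpr (measure_singleton (0:ℝ))] with u hu
      rcases lt_trichotomy u 0 with h | h | h
      · rw [if_neg (not_le.mpr h), ENNReal.ofReal_zero, zero_mul,
          Set.indicator_of_notMem (fun hmem => absurd hmem.1 (not_lt.mpr h.le))]
      · exact absurd h hu
      · rcases le_or_gt u x with hux | hux
        · rw [if_pos h.le, Set.indicator_of_mem (Set.mem_Ioc.mpr ⟨h, hux⟩), ENNReal.ofReal_mul (Real.exp_nonneg _)]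
        · rw [Set.indicator_of_notMem (fun hmem => absurd hmem.2 (not_le.mpr hux)),
            hη0 (α * (x - u)) (mul_nonpos_of_nonneg_of_nonpos hαpos.le (by linarith)),
            ENNReal.ofReal_zero, mul_zero]
    rw [lintegral_congr_ae hcongr, lintegral_indicator measurableSet_Ioc]
    have hm1x : Measurable fun u : ℝ => α * (x - u) := by fun_prop
    have hint : IntegrableOn (fun u => Real.exp (-u) * η (α * (x - u))) (Set.Ioc 0 x) volume := by
      refine ⟨((measurable_id.neg.exp).mul (hηm.comp hm1x)).aestronglyMeasurable, ?_⟩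
      · rw [HasFiniteIntegral]
        calc ∫⁻ u in Set.Ioc 0 x, ‖Real.exp (-u) * η (α * (x - u))‖ₑ ∂volume
            ≤ ∫⁻ u in Set.Ioc 0 x, ENNReal.ofReal (η (α * (x - u))) ∂volume := by
              apply setLIntegral_mono hφm
              intro u hu
              rw [Real.enorm_eq_ofReal (mul_nonneg (Real.exp_nonneg _) (hηnonneg _))]
              apply ENNReal.ofReal_le_ofReal
              nlinarith [Real.exp_le_one_iff.mpr (by linarith [hu.1] : -u ≤ 0),
                hηnonneg (α * (x - u)), Real.exp_nonneg (-u)]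
          _ = ENNReal.ofReal α⁻¹ * ∫⁻ y in Set.Ioc 0 (α * x), ENNReal.ofReal (η y) ∂volume :=
              cov hαpos hηm x
          _ < ∞ := ENNReal.mul_lt_top ENNReal.ofReal_lt_top (L_fin hα hηm hηnonneg hηfix _)
    rw [← ofReal_integral_eq_lintegral_ofReal hint
      (Filter.Eventually.of_forall fun u => mul_nonneg (Real.exp_nonneg _) (hηnonneg _))]
    have hfix := hηfix x hx.le
    rw [intervalIntegral.integral_of_le hx.le] at hfix
    have : ∫ u in Set.Ioc 0 x, Real.exp (-u) * η (α * (x - u)) ∂volume = 2⁻¹ * η x := by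
      rw [hfix]; ring
    rw [this, ENNReal.ofReal_mul (by norm_num),
      ENNReal.ofReal_inv_of_pos (by norm_num : (0:ℝ) < 2), ENNReal.ofReal_ofNat]

/-! ### The freezing lemma -/

lemma freeze {Ω : Type*} {mm : MeasurableSpace Ω} [m0 : MeasurableSpace Ω]
    (μ : Measure Ω) [IsProbabilityMeasure μ]
    (hle : mm ≤ m0) {V : Ω → ℝ × ℝ} {U : Ω → ℝ}
    (hV : Measurable[mm] V) (hU : Measurable U)
    (hind : Indep mm (MeasurableSpace.comap U Real.measurableSpace) μ)
    {G : (ℝ × ℝ) × ℝ → ℝ≥0∞} (hG : Measurable G) :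
    ∫⁻ ω, G (V ω, U ω) ∂μ = ∫⁻ ω, ∫⁻ u, G (V ω, u) ∂(μ.map U) ∂μ := by
  have hVm : Measurable V := hV.mono hle le_rfl
  have hVU : IndepFun V U μ := by
    rw [IndepFun_iff_Indep]
    exact indep_of_indep_of_le_left hind (measurable_iff_comap_le.mp hV)
  have hmap : μ.map (fun ω => (V ω, U ω)) = (μ.map V).prod (μ.map U) :=
    (indepFun_iff_map_prod_eq_prod_map_map hVm.aemeasurable hU.aemeasurable).mp hVU
  haveI : IsProbabilityMeasure (μ.map V) := Measure.isProbabilityMeasure_map hVm.aemeasurable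
  haveI : IsProbabilityMeasure (μ.map U) := Measure.isProbabilityMeasure_map hU.aemeasurable
  calc ∫⁻ ω, G (V ω, U ω) ∂μ
      = ∫⁻ p, G p ∂(μ.map (fun ω => (V ω, U ω))) := (lintegral_map hG (hVm.prodMk hU)).symm
    _ = ∫⁻ p, G p ∂((μ.map V).prod (μ.map U)) := by rw [hmap]
    _ = ∫⁻ v, ∫⁻ u, G (v, u) ∂(μ.map U) ∂(μ.map V) := lintegral_prod G hG.aemeasurable
    _ = ∫⁻ ω, ∫⁻ u, G (V ω, u) ∂(μ.map U) ∂μ :=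
        lintegral_map (Measurable.lintegral_prod_right hG) hVm

/-! ### Tree combinatorics -/

noncomputable def Afun {Ω : Type*} (α t : ℝ) (T : List Bool → Ω → ℝ) (v : List Bool) (ω : Ω) : ℝ :=
  α ^ (v.length + 1) * (t - treeTheta α T v ω)

lemma theta_append {Ω : Type*} (α : ℝ) (T : List Bool → Ω → ℝ) (w : List Bool) (b : Bool) (ω : Ω) :
    treeTheta α T (w ++ [b]) ω
      = treeTheta α T w ω + (1 / α) ^ (w.length + 1) * T (w ++ [b]) ω := by
  unfold treeTheta
  have hlen : (w ++ [b]).length = w.length + 1 := by simp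
  rw [hlen, Finset.sum_range_succ]
  congr 1
  · apply Finset.sum_congr rfl
    intro j hj
    rw [List.take_append_of_le_length (Nat.lt_succ_iff.mp (Finset.mem_range.mp hj))]
  · rw [List.take_of_length_le (by simp)]

lemma Afun_append {Ω : Type*} {α : ℝ} (hα : α ≠ 0) (t : ℝ) (T : List Bool → Ω → ℝ)
    (w : List Bool) (b : Bool) (ω : Ω) :
    Afun α t T (w ++ [b]) ω = α * (Afun α t T w ω - T (w ++ [b]) ω) := by
  unfold Afun
  rw [theta_append]
  have hlen : (w ++ [b]).length = w.length + 1 := by simp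
  rw [hlen]
  rw [one_div, inv_pow]
  field_simp
  ring

lemma Afun_meas {Ω : Type*} {m' : MeasurableSpace Ω} (α t : ℝ) {T : List Bool → Ω → ℝ}
    (hT : ∀ v, Measurable[m'] (T v)) (v : List Bool) : Measurable[m'] (Afun α t T v) := by
  unfold Afun treeTheta
  exact (measurable_const.sub
    (Finset.measurable_sum _ fun j _ => (hT _).const_mul _)).const_mul _

/-! ### Probabilistic lemmas -/

section Main

variable {Ω : Type*} [m0 : MeasurableSpace Ω] (μ : Measure Ω) [IsProbabilityMeasure μ]
    {α : ℝ} {T : List Bool → Ω → ℝ} {η : ℝ → ℝ} {t : ℝ} {F : Filtration ℕ m0}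

/-- Measurability of the `Θ`-functions with respect to the filtration. -/
lemma theta_measF (hF : ∀ n, F n =
      ⨆ v ∈ {v : List Bool | v.length ≤ n}, MeasurableSpace.comap (T v) inferInstance)
    (n : ℕ) (v : List Bool) (hv : v.length ≤ n) :
    Measurable[F n] (treeTheta α T v) := by
  unfold treeTheta
  apply Finset.measurable_sum
  intro j _
  apply Measurable.const_mul
  have hcom : MeasurableSpace.comap (T (v.take j)) inferInstance ≤ F n := by
    rw [hF n]
    exact le_iSup₂ (f := fun u (_ : u ∈ {v : List Bool | v.length ≤ n}) =>
        MeasurableSpace.comap (T u) inferInstance) (v.take j)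
      (le_trans (by rw [List.length_take]; exact min_le_right _ _) hv)
  exact measurable_iff_comap_le.mpr hcom

omit [IsProbabilityMeasure μ] in
lemma indep_step (hTmeas : ∀ v, Measurable (T v))
    (hindep : iIndepFun T μ)
    (hF : ∀ n, F n =
      ⨆ v ∈ {v : List Bool | v.length ≤ n}, MeasurableSpace.comap (T v) inferInstance)
    (n : ℕ) (v : List Bool) (hv : n < v.length) :
    Indep (F n) (MeasurableSpace.comap (T v) Real.measurableSpace) μ := by
  rw [hF n]
  have h := indep_iSup_of_disjoint (μ := μ)
    (m := fun u : List Bool => MeasurableSpace.comap (T u) Real.measurableSpace)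
    (fun u => (hTmeas u).comap_le) hindep.iIndep
    (S := {u : List Bool | u.length ≤ n}) (T := {v})
    (Set.disjoint_left.mpr fun u hu hu' => by
      rw [Set.mem_singleton_iff] at hu'
      subst hu'
      exact absurd hv (not_lt.mpr hu))
  simpa using h

/-- The main one-step identity. -/
lemma main_step (hα : 1 < α) (hTmeas : ∀ v, Measurable (T v))
    (hindep : iIndepFun T μ)
    (hdist : ∀ v, Measure.map (T v) μ = expMeasure1)
    (hηmeas : Measurable η) (hηnonneg : ∀ u, 0 ≤ η u)
    (hη0 : ∀ u : ℝ, u ≤ 0 → η u = 0)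
    (hηfix : ∀ u : ℝ, 0 ≤ u →
      η u = 2 * ∫ s in (0 : ℝ)..u, Real.exp (-s) * η (α * (u - s)))
    (hF : ∀ n, F n =
      ⨆ v ∈ {v : List Bool | v.length ≤ n}, MeasurableSpace.comap (T v) inferInstance)
    (n : ℕ) (w : List Bool) (hw : w.length = n) (b : Bool)
    (s : Set Ω) (hs : MeasurableSet[F n] s) :
    ∫⁻ ω in s, ENNReal.ofReal (η (Afun α t T (w ++ [b]) ω)) ∂μ
      = 2⁻¹ * ∫⁻ ω in s, ENNReal.ofReal (η (Afun α t T w ω)) ∂μ := by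
  have hα0 : α ≠ 0 := by positivity
  have hsm : MeasurableSet s := F.le n s hs
  set G : (ℝ × ℝ) × ℝ → ℝ≥0∞ := fun p =>
    ENNReal.ofReal p.1.2 * ENNReal.ofReal (η (α * (p.1.1 - p.2))) with hGdef
  have hGmeas : Measurable G := by
    have h1 : Measurable fun p : (ℝ × ℝ) × ℝ => α * (p.1.1 - p.2) := by fun_prop
    exact (measurable_fst.snd.ennreal_ofReal).mul (hηmeas.comp h1).ennreal_ofReal
  set V : Ω → ℝ × ℝ := fun ω => (Afun α t T w ω, s.indicator (fun _ => (1:ℝ)) ω) with hVdef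
  have hVF : Measurable[F n] V := by
    apply Measurable.prodMk
    · exact ((theta_measF hF n w hw.le).const_sub t).const_mul _
    · exact measurable_const.indicator hs
  have hind := indep_step μ hTmeas hindep hF n (w ++ [b]) (by simp [hw])
  have hfr := freeze μ (F.le n) hVF (hTmeas (w ++ [b])) hind hGmeas
  have hL : ∀ ω, G (V ω, T (w ++ [b]) ω)
      = s.indicator (fun ω' => ENNReal.ofReal (η (Afun α t T (w ++ [b]) ω'))) ω := by
    intro ω
    by_cases hω : ω ∈ s
    · simp only [hGdef, hVdef, Set.indicator_of_mem hω, ENNReal.ofReal_one, one_mul,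
        Afun_append hα0 t T w b ω]
    · simp only [hGdef, hVdef, Set.indicator_of_notMem hω, ENNReal.ofReal_zero, zero_mul]
  have hR : ∀ ω, (∫⁻ u, G (V ω, u) ∂(μ.map (T (w ++ [b]))))
      = s.indicator (fun ω' => 2⁻¹ * ENNReal.ofReal (η (Afun α t T w ω'))) ω := by
    intro ω
    rw [hdist (w ++ [b])]
    have : ∀ u : ℝ, G (V ω, u) = ENNReal.ofReal (s.indicator (fun _ => (1:ℝ)) ω)
        * ENNReal.ofReal (η (α * (Afun α t T w ω - u))) := fun u => rfl
    simp only [this]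
    have hφm : Measurable fun u : ℝ => ENNReal.ofReal (η (α * (Afun α t T w ω - u))) :=
      (hηmeas.comp (by fun_prop)).ennreal_ofReal
    rw [lintegral_const_mul _ hφm, E1 hα hηmeas hηnonneg hη0 hηfix]
    by_cases hω : ω ∈ s
    · simp [Set.indicator_of_mem hω]
    · simp [Set.indicator_of_notMem hω]
  calc ∫⁻ ω in s, ENNReal.ofReal (η (Afun α t T (w ++ [b]) ω)) ∂μ
      = ∫⁻ ω, s.indicator (fun ω' => ENNReal.ofReal (η (Afun α t T (w ++ [b]) ω'))) ω ∂μ := by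
        rw [lintegral_indicator hsm]
    _ = ∫⁻ ω, G (V ω, T (w ++ [b]) ω) ∂μ := lintegral_congr fun ω => (hL ω).symm
    _ = ∫⁻ ω, ∫⁻ u, G (V ω, u) ∂(μ.map (T (w ++ [b]))) ∂μ := hfr
    _ = ∫⁻ ω, s.indicator (fun ω' => 2⁻¹ * ENNReal.ofReal (η (Afun α t T w ω'))) ω ∂μ :=
        lintegral_congr hR
    _ = ∫⁻ ω in s, 2⁻¹ * ENNReal.ofReal (η (Afun α t T w ω)) ∂μ := lintegral_indicator hsm _
    _ = 2⁻¹ * ∫⁻ ω in s, ENNReal.ofReal (η (Afun α t T w ω)) ∂μ := by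
        have hφm : Measurable fun ω : Ω => ENNReal.ofReal (η (Afun α t T w ω)) :=
          (hηmeas.comp (Afun_meas α t (fun v => hTmeas v) w)).ennreal_ofReal
        rw [lintegral_const_mul _ hφm]

/-- The level-`n` lintegral of a single term. -/
lemma level_lintegral (hα : 1 < α) (hTmeas : ∀ v, Measurable (T v))
    (hindep : iIndepFun T μ)
    (hdist : ∀ v, Measure.map (T v) μ = expMeasure1)
    (hηmeas : Measurable η) (hηnonneg : ∀ u, 0 ≤ η u)
    (hη0 : ∀ u : ℝ, u ≤ 0 → η u = 0)
    (hηfix : ∀ u : ℝ, 0 ≤ u →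
      η u = 2 * ∫ s in (0 : ℝ)..u, Real.exp (-s) * η (α * (u - s)))
    (hF : ∀ n, F n =
      ⨆ v ∈ {v : List Bool | v.length ≤ n}, MeasurableSpace.comap (T v) inferInstance)
    (n : ℕ) (w : Fin n → Bool) :
    ∫⁻ ω, ENNReal.ofReal (η (Afun α t T (List.ofFn w) ω)) ∂μ
      = 2⁻¹ ^ (n + 1) * ENNReal.ofReal (η t) := by
  induction n with
  | zero =>
    have h0 : ∀ ω, Afun α t T (List.ofFn w) ω = α * (t - T [] ω) := by
      intro ω
      simp [Afun, treeTheta, Finset.sum_range_one]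
    have hm : Measurable fun u : ℝ => ENNReal.ofReal (η (α * (t - u))) :=
      (hηmeas.comp (by fun_prop)).ennreal_ofReal
    calc ∫⁻ ω, ENNReal.ofReal (η (Afun α t T (List.ofFn w) ω)) ∂μ
        = ∫⁻ ω, ENNReal.ofReal (η (α * (t - T [] ω))) ∂μ :=
          lintegral_congr fun ω => by rw [h0]
      _ = ∫⁻ u, ENNReal.ofReal (η (α * (t - u))) ∂(μ.map (T [])) :=
          (lintegral_map hm (hTmeas [])).symm
      _ = 2⁻¹ ^ (0 + 1) * ENNReal.ofReal (η t) := by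
          rw [hdist [], E1 hα hηmeas hηnonneg hη0 hηfix, pow_one]
  | succ n ih =>
    have hofn : List.ofFn w = List.ofFn (fun i : Fin n => w i.castSucc) ++ [w (Fin.last n)] := by
      rw [List.ofFn_succ', List.concat_eq_append]
    have hstep := main_step (t := t) μ hα hTmeas hindep hdist hηmeas hηnonneg hη0 hηfix hF n
      (List.ofFn fun i : Fin n => w i.castSucc) List.length_ofFn (w (Fin.last n))
      Set.univ MeasurableSet.univ
    rw [Measure.restrict_univ] at hstep
    rw [hofn, hstep, ih (fun i => w i.castSucc), pow_succ]
    ring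

end Main
end PantProof

/-- With i.i.d. mean-one exponentials `T_v` on the binary tree, `α > 1`,
and `η ≥ 0` vanishing on `(-∞,0]` satisfying `η(t) = 2∫_0^t e^{-s} η(α(t-s)) ds`, the
iterates `X_n(t) = Σ_{|v|=n-1} 2η(αⁿ(t - Θ_v))` (for `n ≥ 1`) form a nonnegative
martingale with respect to `F_n = σ(T_v : |v| ≤ n)`, and `E[X_n(t)] = η(t)` for all `n`. -/
theorem pantIter_martingale {Ω : Type*} [m0 : MeasurableSpace Ω]
    (μ : Measure Ω) [IsProbabilityMeasure μ]
    (α : ℝ) (hα : 1 < α)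
    (T : List Bool → Ω → ℝ) (hTmeas : ∀ v, Measurable (T v))
    (hindep : iIndepFun T μ)
    (hdist : ∀ v, Measure.map (T v) μ = expMeasure1)
    (η : ℝ → ℝ) (hηmeas : Measurable η) (hηnonneg : ∀ u, 0 ≤ η u)
    (hη0 : ∀ u : ℝ, u ≤ 0 → η u = 0)
    (hηfix : ∀ u : ℝ, 0 ≤ u →
      η u = 2 * ∫ s in (0 : ℝ)..u, Real.exp (-s) * η (α * (u - s)))
    (t : ℝ) (ht : 0 < t)
    (F : Filtration ℕ m0)
    (hF : ∀ n, F n =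
      ⨆ v ∈ {v : List Bool | v.length ≤ n}, MeasurableSpace.comap (T v) inferInstance) :
    (∀ n ω, 0 ≤ pantIter α T η t n ω) ∧
    Martingale (pantIter α T η t) F μ ∧
    ∀ n, ∫ ω, pantIter α T η t n ω ∂μ = η t := by
  classical
  have hpant : ∀ n, pantIter α T η t n
      = fun ω => ∑ f : Fin n → Bool, 2 * η (PantProof.Afun α t T (List.ofFn f) ω) := by
    intro n; funext ω
    unfold pantIter PantProof.Afun
    apply Finset.sum_congr rfl
    intro f _
    rw [List.length_ofFn]
  have hAmeas : ∀ v, Measurable (PantProof.Afun α t T v) :=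
    PantProof.Afun_meas α t hTmeas
  have hLINT := PantProof.level_lintegral (t := t) μ hα hTmeas hindep hdist hηmeas hηnonneg
    hη0 hηfix hF
  -- integrability of single terms
  have hint1 : ∀ (n : ℕ) (w : Fin n → Bool),
      Integrable (fun ω => η (PantProof.Afun α t T (List.ofFn w) ω)) μ := by
    intro n w
    refine ⟨(hηmeas.comp (hAmeas _)).aestronglyMeasurable, ?_⟩
    have hnorm : ∫⁻ ω, ‖η (PantProof.Afun α t T (List.ofFn w) ω)‖ₑ ∂μ
        = 2⁻¹ ^ (n + 1) * ENNReal.ofReal (η t) := by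
      rw [← hLINT n w]
      exact lintegral_congr fun ω => Real.enorm_eq_ofReal (hηnonneg _)
    rw [HasFiniteIntegral, hnorm]
    exact ENNReal.mul_lt_top
      (ENNReal.pow_lt_top (ENNReal.inv_lt_top.mpr (by norm_num))) ENNReal.ofReal_lt_top
  have hint2 : ∀ n, Integrable (pantIter α T η t n) μ := by
    intro n
    rw [hpant n]
    exact integrable_finset_sum _ fun f _ => (hint1 n f).const_mul 2
  -- nonnegativity
  have hnn : ∀ n ω, 0 ≤ pantIter α T η t n ω := by
    intro n ω
    rw [hpant n]
    exact Finset.sum_nonneg fun f _ => mul_nonneg (by norm_num) (hηnonneg _)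
  -- adaptedness
  have hadp : StronglyAdapted F (pantIter α T η t) := by
    intro n
    rw [hpant n]
    apply Measurable.stronglyMeasurable
    apply Finset.measurable_sum
    intro f _
    apply Measurable.const_mul
    exact hηmeas.comp
      (((PantProof.theta_measF hF n (List.ofFn f)
        (le_of_eq List.length_ofFn)).const_sub t).const_mul _)
  -- means
  have hmean : ∀ n, ∫ ω, pantIter α T η t n ω ∂μ = η t := by
    intro n
    have hterm : ∀ f : Fin n → Bool,
        ∫ ω, 2 * η (PantProof.Afun α t T (List.ofFn f) ω) ∂μ = 2⁻¹ ^ n * η t := by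
      intro f
      rw [integral_const_mul,
        integral_eq_lintegral_of_nonneg_ae (Filter.Eventually.of_forall fun ω => hηnonneg _)
          ((hηmeas.comp (hAmeas _)).aestronglyMeasurable),
        hLINT n f, ENNReal.toReal_mul, ENNReal.toReal_pow, ENNReal.toReal_inv,
        ENNReal.toReal_ofNat, ENNReal.toReal_ofReal (hηnonneg t), pow_succ]
      ring
    simp only [hpant]
    rw [integral_finset_sum _ fun f _ => (hint1 n f).const_mul 2,
      Finset.sum_congr rfl fun f _ => hterm f, Finset.sum_const, Finset.card_univ,
      Fintype.card_fun, Fintype.card_bool, Fintype.card_fin, nsmul_eq_mul]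
    push_cast
    rw [← mul_assoc, ← mul_pow]
    norm_num
  -- martingale property
  have hcond : ∀ n, pantIter α T η t n =ᵐ[μ] μ[pantIter α T η t (n + 1) | F n] := by
    intro n
    refine ae_eq_condExp_of_forall_setIntegral_eq (F.le n) (hint2 (n + 1))
      (fun s _ _ => (hint2 n).integrableOn) (fun s hs hμs => ?_)
      ((hadp n).aestronglyMeasurable)
    have hsm : MeasurableSet s := F.le n s hs
    have hconv : ∀ v : List Bool, ∫ ω in s, η (PantProof.Afun α t T v ω) ∂μ
        = (∫⁻ ω in s, ENNReal.ofReal (η (PantProof.Afun α t T v ω)) ∂μ).toReal := by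
      intro v
      rw [integral_eq_lintegral_of_nonneg_ae (Filter.Eventually.of_forall fun ω => hηnonneg _)
        ((hηmeas.comp (hAmeas v)).aestronglyMeasurable)]
    have hterm : ∀ f : Fin (n + 1) → Bool,
        ∫ ω in s, 2 * η (PantProof.Afun α t T (List.ofFn f) ω) ∂μ
          = ∫ ω in s, η (PantProof.Afun α t T (List.ofFn fun i : Fin n => f i.castSucc) ω) ∂μ := by
      intro f
      have hofn : List.ofFn f
          = List.ofFn (fun i : Fin n => f i.castSucc) ++ [f (Fin.last n)] := by
        rw [List.ofFn_succ', List.concat_eq_append]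
      rw [integral_const_mul, hconv, hconv, hofn,
        PantProof.main_step (t := t) μ hα hTmeas hindep hdist hηmeas hηnonneg hη0 hηfix hF n
          (List.ofFn fun i : Fin n => f i.castSucc) List.length_ofFn (f (Fin.last n)) s hs,
        ENNReal.toReal_mul, ENNReal.toReal_inv, ENNReal.toReal_ofNat]
      ring
    have hre : ∀ g : (Fin n → Bool) → ℝ,
        (∑ f : Fin (n + 1) → Bool, g (fun i => f i.castSucc))
          = ∑ w : Fin n → Bool, 2 * g w := by
      intro g
      rw [← Equiv.sum_comp (Fin.insertNthEquiv (fun _ : Fin (n + 1) => Bool) (Fin.last n))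
        (fun f : Fin (n + 1) → Bool => g (fun i => f i.castSucc)), Fintype.sum_prod_type]
      have hkey : ∀ (b : Bool) (v : Fin n → Bool),
          (fun i : Fin n =>
            (Fin.insertNthEquiv (fun _ : Fin (n + 1) => Bool) (Fin.last n)) (b, v) i.castSucc)
            = v := by
        intro b v; funext i
        show @Fin.insertNth n (fun _ => Bool) (Fin.last n) b v i.castSucc = v i
        have h := @Fin.insertNth_apply_succAbove n (fun _ => Bool) (Fin.last n) b v i
        rw [Fin.succAbove_last] at h
        exact h
      simp only [hkey]
      rw [Fintype.sum_bool, ← Finset.sum_add_distrib]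
      exact Finset.sum_congr rfl fun v _ => (two_mul (g v)).symm
    simp only [hpant]
    rw [integral_finset_sum _ fun f _ => ((hint1 n f).const_mul 2).integrableOn,
      integral_finset_sum _ fun f _ => ((hint1 (n + 1) f).const_mul 2).integrableOn,
      Finset.sum_congr rfl fun f _ => hterm f,
      hre fun w => ∫ ω in s, η (PantProof.Afun α t T (List.ofFn w) ω) ∂μ]
    exact Finset.sum_congr rfl fun w _ => by rw [integral_const_mul]
  exact ⟨hnn, martingale_nat hadp hint2 hcond, hmean⟩
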